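/- For every u ∈ Iᵐ_{d,n}, the m-primary Plücker relation F_{m,u} has exactly |u ∖ m| + 1 nonzero terms; consequently 0 ≤ rank(F_{m,u}) ≤ d − 2, i.e. F_{m,u} has at least 3 and at most d + 1 nonzero terms. -/

import Mathlib

open MvPolynomial

namespace Resolution

/-- `I_{d,n}`: the set of `d`-element subsets of `{1,…,n}` (modeled on `Fin n`),
indexing the Plücker variables `p_w`. -/
abbrev Idx (d n : ℕ) : Type := {w : Finset (Fin n) // w.card = d}

variable (𝕜 : Type) [Field 𝕜] (d : ℕ) {n : ℕ}

/-- The symbol `p_{w₁ ⋯ w_k a}` for the index list consisting of the elements of `S` in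
increasing order followed by `a`: it is `0` if the entries repeat (i.e. `a ∈ S`), and
otherwise it is `(-1)^{#{x ∈ S | a < x}} · p_{insert a S}`, the sign being that of the
permutation sorting the list. -/
noncomputable def pApp (S : Finset (Fin n)) (a : Fin n) : MvPolynomial (Idx d n) 𝕜 :=
  if h : a ∉ S ∧ (insert a S).card = d then
    ((-1 : 𝕜) ^ (S.filter fun x => a < x).card) • X ⟨insert a S, h.2⟩
  else 0

/-- The symbol `p_{a w₁ ⋯ w_k}` for the index list consisting of `a` followed by the
elements of `S` in increasing order:  it is `0` if the entries repeat, and otherwise it is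
`(-1)^{#{x ∈ S | x < a}} · p_{insert a S}`. -/
noncomputable def pPre (a : Fin n) (S : Finset (Fin n)) : MvPolynomial (Idx d n) 𝕜 :=
  if h : a ∉ S ∧ (insert a S).card = d then
    ((-1 : 𝕜) ^ (S.filter fun x => x < a).card) • X ⟨insert a S, h.2⟩
  else 0

/-- The `m`-primary Plücker relation
`F_{m,u} = p_m p_{uʳu₀} + ∑_{i=1}^d (-1)^i p_{uʳmᵢ} p_{u₀(m∖mᵢ)}`,
where `u₀ = min (u \ m)`, `uʳ = u.erase u₀` and `m₁ < ⋯ < m_d` lists `m`.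
(It is defined to be `0` unless `m.card = d`, `u.card = d` and `2 ≤ (u \ m).card`,
i.e. unless `u ∈ Iᵐ_{d,n}`.) -/
noncomputable def Fmu (m u : Finset (Fin n)) : MvPolynomial (Idx d n) 𝕜 :=
  if h : m.card = d ∧ u.card = d ∧ 2 ≤ (u \ m).card then
    let u0 : Fin n := (u \ m).min' (Finset.card_pos.mp (lt_of_lt_of_le two_pos h.2.2))
    X ⟨m, h.1⟩ * pApp 𝕜 d (u.erase u0) u0 +
      ∑ i : Fin d, ((-1 : 𝕜) ^ ((i : ℕ) + 1)) •
        (pApp 𝕜 d (u.erase u0) ((m.orderIsoOfFin h.1 i).1) *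
          pPre 𝕜 d u0 (m.erase ((m.orderIsoOfFin h.1 i).1)))
  else 0

/-- The rank of an `m`-primary Plücker relation: (number of nonzero terms) − 3. -/
noncomputable def rank {𝕜 : Type} [Field 𝕜] {d n : ℕ} (F : MvPolynomial (Idx d n) 𝕜) : ℕ :=
  F.support.card - 3

/-- The index set `I_{d,n} ∖ {m}` of the variables `x_w` of the dehomogenized
(with respect to the chart `p_m = 1`) polynomial ring `R̄₀`. -/
abbrev BIdx (d : ℕ) {n : ℕ} (m : Finset (Fin n)) : Type := {w : Idx d n // w.val ≠ m}

/-- Dehomogenization with respect to the chart `p_m = 1`: the `𝕜`-algebra map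
`R₀ = 𝕜[p_w : w ∈ I_{d,n}] → R̄₀ = 𝕜[x_w : w ∈ I_{d,n} ∖ {m}]`, `p_m ↦ 1`, `p_w ↦ x_w`. -/
noncomputable def dehom (m : Finset (Fin n)) :
    MvPolynomial (Idx d n) 𝕜 →ₐ[𝕜] MvPolynomial (BIdx d m) 𝕜 :=
  aeval fun w => if h : w.val = m then 1 else X ⟨w, h⟩

open Finset Function

/-!
Write `m = {m₁ < ⋯ < m_d}`. The `i`-th summand of `F_{m,u}` contains `p_{uʳmᵢ}`, which vanishes
when `mᵢ ∈ u` (then `mᵢ ∈ uʳ`, as `u₀ ∉ m`). When `mᵢ ∉ u` it is `±p_{uʳ ∪ mᵢ} p_{(m ∖ mᵢ) ∪ u₀}`,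
the monomial obtained by exchanging `mᵢ` and `u₀` between `u` and `m`. These `|m ∖ u| = |u ∖ m|`
monomials and `p_m p_u` are pairwise distinct: `u₀` lies in exactly one factor of an exchange
monomial and that factor is not `m`, while the other factor contains an element of `uʳ ∖ m`
and determines `mᵢ`. So `F_{m,u}` has `|u ∖ m| + 1` terms, and `2 ≤ |u ∖ m| ≤ d` gives the bounds.
-/

section

theorem card_support_sum_of_eq_monomial {σ ι K : Type*} [CommSemiring K] [Fintype ι]
    {f : ι → MvPolynomial σ K} {E : ι → σ →₀ ℕ} (hE : Injective E)
    (hf : ∀ i, ∃ c ≠ 0, f i = monomial (E i) c) :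
    (∑ i, f i).support.card = Fintype.card ι := by
  classical
  choose c hc hfc using hf
  have hsupp : (∑ i, f i).support = univ.image E := by
    ext e
    simp only [hfc, mem_support_iff, coeff_sum, coeff_monomial, mem_image, mem_univ, true_and]
    by_cases he : ∃ j, E j = e
    · obtain ⟨j, rfl⟩ := he
      simp [hE.eq_iff, hc]
    · push Not at he
      simp [he]
  rw [hsupp, card_image_of_injective _ hE, card_univ]

variable {𝕜 d}

def exchange (w : Idx d n) {a b : Fin n} (ha : a ∈ w.1) (hb : b ∉ w.1) : Idx d n :=
  ⟨insert b (w.1.erase a), by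
    rw [card_insert_of_notMem (fun h => hb (mem_of_mem_erase h)), card_erase_add_one ha, w.2]⟩

@[simp]
theorem mem_exchange {w : Idx d n} {a b x : Fin n} (ha : a ∈ w.1) (hb : b ∉ w.1) :
    x ∈ (exchange w ha hb).1 ↔ x = b ∨ x ≠ a ∧ x ∈ w.1 := by
  simp [exchange]

theorem pApp_eq_zero_of_mem {S : Finset (Fin n)} {a : Fin n} (ha : a ∈ S) :
    pApp 𝕜 d S a = 0 := by
  simp [pApp, ha]

theorem X_mul_pApp_erase (v w : Idx d n) {a : Fin n} (ha : a ∈ w.1) :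
    X v * pApp 𝕜 d (w.1.erase a) a =
      monomial (Finsupp.single v 1 + Finsupp.single w 1) ((-1) ^ #{x ∈ w.1.erase a | a < x}) := by
  rw [pApp, dif_pos ⟨notMem_erase a _, by rw [insert_erase ha, w.2]⟩]
  simp only [insert_erase ha, X, smul_monomial, monomial_mul, one_mul, smul_eq_mul, mul_one]

theorem pApp_erase_mul_pPre_erase {v w : Idx d n} {a b : Fin n} (ha : a ∈ w.1) (hb : b ∉ w.1)
    (hb' : b ∈ v.1) (ha' : a ∉ v.1) :
    pApp 𝕜 d (w.1.erase a) b * pPre 𝕜 d a (v.1.erase b) =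
      monomial (Finsupp.single (exchange w ha hb) 1 + Finsupp.single (exchange v hb' ha') 1)
        ((-1) ^ #{x ∈ w.1.erase a | b < x} * (-1) ^ #{x ∈ v.1.erase b | x < a}) := by
  rw [pApp, pPre, dif_pos ⟨fun h => hb (mem_of_mem_erase h), (exchange w ha hb).2⟩,
    dif_pos ⟨fun h => ha' (mem_of_mem_erase h), (exchange v hb' ha').2⟩]
  simp only [exchange, X, smul_monomial, monomial_mul, smul_eq_mul, mul_one]

variable {m u : Finset (Fin n)} {u0 : Fin n}

variable (𝕜 d) in
noncomputable def pluckerRel (hm : m.card = d) (u : Finset (Fin n)) (u0 : Fin n) :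
    MvPolynomial (Idx d n) 𝕜 :=
  X ⟨m, hm⟩ * pApp 𝕜 d (u.erase u0) u0 +
    ∑ i : Fin d, ((-1 : 𝕜) ^ ((i : ℕ) + 1)) •
      (pApp 𝕜 d (u.erase u0) (m.orderEmbOfFin hm i) *
        pPre 𝕜 d u0 (m.erase (m.orderEmbOfFin hm i)))

theorem Fmu_eq_pluckerRel (hm : m.card = d) (hu : u.card = d) (hu2 : 2 ≤ #(u \ m))
    (hne : (u \ m).Nonempty) :
    Fmu 𝕜 d m u = pluckerRel 𝕜 d hm u ((u \ m).min' hne) := by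
  rw [Fmu, dif_pos ⟨hm, hu, hu2⟩]
  rfl

variable (𝕜) in
noncomputable def pluckerTerm (hm : m.card = d) (u : Finset (Fin n)) (u0 : Fin n) :
    Option {i : Fin d // m.orderEmbOfFin hm i ∉ u} → MvPolynomial (Idx d n) 𝕜
  | none => X ⟨m, hm⟩ * pApp 𝕜 d (u.erase u0) u0
  | some i => ((-1 : 𝕜) ^ ((i : ℕ) + 1)) •
      (pApp 𝕜 d (u.erase u0) (m.orderEmbOfFin hm i) *
        pPre 𝕜 d u0 (m.erase (m.orderEmbOfFin hm i)))

theorem pluckerRel_eq_sum_pluckerTerm (hm : m.card = d) (hu0m : u0 ∉ m) :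
    pluckerRel 𝕜 d hm u u0 = ∑ o, pluckerTerm 𝕜 hm u u0 o := by
  rw [pluckerRel, Fintype.sum_option,
    ← sum_filter_of_ne (p := fun i => m.orderEmbOfFin hm i ∉ u),
    sum_subtype (p := fun i => m.orderEmbOfFin hm i ∉ u) _ (fun i => by simp)]
  · rfl
  intro i _ hne hmem
  have hne_u0 : m.orderEmbOfFin hm i ≠ u0 := ne_of_mem_of_not_mem (orderEmbOfFin_mem m hm i) hu0m
  rw [pApp_eq_zero_of_mem (mem_erase.2 ⟨hne_u0, hmem⟩), zero_mul, smul_zero] at hne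
  exact hne rfl

noncomputable def pluckerExp (hm : m.card = d) (hu : u.card = d) (hu0u : u0 ∈ u)
    (hu0m : u0 ∉ m) :
    Option {i : Fin d // m.orderEmbOfFin hm i ∉ u} → Idx d n →₀ ℕ
  | none => Finsupp.single ⟨m, hm⟩ 1 + Finsupp.single ⟨u, hu⟩ 1
  | some i => Finsupp.single (exchange ⟨u, hu⟩ hu0u i.2) 1 +
      Finsupp.single (exchange ⟨m, hm⟩ (m.orderEmbOfFin_mem hm i) hu0m) 1

theorem pluckerTerm_eq_monomial (hm : m.card = d) (hu : u.card = d) (hu0u : u0 ∈ u)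
    (hu0m : u0 ∉ m) (o : Option {i : Fin d // m.orderEmbOfFin hm i ∉ u}) :
    ∃ c ≠ 0, pluckerTerm 𝕜 hm u u0 o = monomial (pluckerExp hm hu hu0u hu0m o) c := by
  cases o with
  | none => exact ⟨_, by simp, X_mul_pApp_erase ⟨m, hm⟩ ⟨u, hu⟩ hu0u⟩
  | some i =>
    have hprod := pApp_erase_mul_pPre_erase (𝕜 := 𝕜) (w := ⟨u, hu⟩) (v := ⟨m, hm⟩) hu0u i.2
      (m.orderEmbOfFin_mem hm i) hu0m
    exact ⟨_, by simp, (congrArg _ hprod).trans (smul_monomial _)⟩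

theorem pluckerExp_injective (hm : m.card = d) (hu : u.card = d) (hu0u : u0 ∈ u)
    (hu0m : u0 ∉ m) {w : Fin n} (hw : w ∈ u \ m) (hwu0 : w ≠ u0) :
    Injective (pluckerExp hm hu hu0u hu0m) := by
  set g := m.orderEmbOfFin hm
  set A := fun i : {i : Fin d // g i ∉ u} => exchange ⟨u, hu⟩ hu0u i.2
  set B := fun i : {i : Fin d // g i ∉ u} => exchange ⟨m, hm⟩ (m.orderEmbOfFin_mem hm i) hu0m
  have hg_ne_u0 : ∀ i, g i ≠ u0 := fun i => ne_of_mem_of_not_mem (orderEmbOfFin_mem m hm i) hu0m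
  have hu0_mem_B : ∀ i, u0 ∈ (B i).1 := by simp [B]
  have hu0_notMem_A : ∀ i, u0 ∉ (A i).1 := by simp [A, (hg_ne_u0 _).symm]
  have hw_mem_A : ∀ i, w ∈ (A i).1 := by simp [A, hwu0, (mem_sdiff.1 hw).1]
  have hA_inj : ∀ i j : {i // g i ∉ u}, (A i).1 = (A j).1 → i = j := fun i j h => by
    have hgi : g i ∈ (A j).1 := h ▸ by simp [A]
    simp only [A, mem_exchange, i.2, and_false, or_false] at hgi
    exact Subtype.ext (g.injective hgi)
  have hA_ne_m : ∀ i, (A i).1 ≠ m := fun i h => (mem_sdiff.1 hw).2 (h ▸ hw_mem_A i)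
  have hB_ne_m : ∀ i, (B i).1 ≠ m := fun i h => hu0m (h ▸ hu0_mem_B i)
  have hA_ne_B : ∀ i j, (A i).1 ≠ (B j).1 := fun i j h => hu0_notMem_A i (h ▸ hu0_mem_B j)
  rintro (_ | i) (_ | j) h <;>
    simp only [pluckerExp, Finsupp.single_add_single_eq_single_add_single one_ne_zero one_ne_zero,
      Subtype.ext_iff] at h
  · rfl
  · rcases h with ⟨h, -⟩ | ⟨-, h, -⟩ | ⟨h, -⟩
    exacts [absurd h.symm (hA_ne_m j), absurd h.symm (hB_ne_m j), absurd h (by norm_num)]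
  · rcases h with ⟨h, -⟩ | ⟨-, -, h⟩ | ⟨h, -⟩
    exacts [absurd h (hA_ne_m i), absurd h (hB_ne_m i), absurd h (by norm_num)]
  · rcases h with ⟨h, -⟩ | ⟨-, h, -⟩ | ⟨h, -⟩
    exacts [congrArg some (hA_inj i j h), absurd h (hA_ne_B i j), absurd h (by norm_num)]

theorem card_notMem_orderEmbOfFin (hm : m.card = d) (u : Finset (Fin n)) :
    Fintype.card {i : Fin d // m.orderEmbOfFin hm i ∉ u} = #(m \ u) := by
  rw [Fintype.card_subtype, sdiff_eq_filter]
  conv_rhs => rw [← map_orderEmbOfFin_univ m hm, filter_map, card_map]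
  rfl

end

theorem card_support_Fmu_general
    (𝕜 : Type) [Field 𝕜] {d n : ℕ}
    (m u : Finset (Fin n)) (hm : m.card = d) (hu : u.card = d)
    (hu2 : 2 ≤ (u \ m).card) :
    (Fmu 𝕜 d m u).support.card = (u \ m).card + 1 ∧
    3 ≤ (Fmu 𝕜 d m u).support.card ∧ (Fmu 𝕜 d m u).support.card ≤ d + 1 := by
  have hne : (u \ m).Nonempty := card_pos.1 (by omega)
  obtain ⟨hu0u, hu0m⟩ := mem_sdiff.1 (min'_mem (u \ m) hne)
  obtain ⟨w, hw, hw_ne⟩ := exists_mem_ne (by omega : 1 < #(u \ m)) ((u \ m).min' hne)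
  have hcard : (Fmu 𝕜 d m u).support.card = (u \ m).card + 1 := by
    rw [Fmu_eq_pluckerRel hm hu hu2 hne, pluckerRel_eq_sum_pluckerTerm hm hu0m,
      card_support_sum_of_eq_monomial (pluckerExp_injective hm hu hu0u hu0m hw hw_ne)
        (pluckerTerm_eq_monomial hm hu hu0u hu0m),
      Fintype.card_option, card_notMem_orderEmbOfFin, card_sdiff_comm (hm.trans hu.symm)]
  have hu_sdiff : #(u \ m) ≤ d := hu ▸ card_le_card sdiff_subset
  exact ⟨hcard, by omega, by omega⟩

/-- **Number of terms of an `m`-primary Plücker relation.**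
For every `u ∈ Iᵐ_{d,n}`, the `m`-primary Plücker relation `F_{m,u}` has exactly
`|u ∖ m| + 1` nonzero terms; consequently `0 ≤ rank F_{m,u} ≤ d − 2`, i.e. `F_{m,u}` has
at least `3` and at most `d + 1` nonzero terms. -/
theorem card_support_Fmu
    (𝕜 : Type) [Field 𝕜] {d n : ℕ} (hd : 1 ≤ d) (hdn : d < n)
    (m u : Finset (Fin n)) (hm : m.card = d) (hu : u.card = d)
    (hu2 : 2 ≤ (u \ m).card) :
    (Fmu 𝕜 d m u).support.card = (u \ m).card + 1 ∧
    3 ≤ (Fmu 𝕜 d m u).support.card ∧ (Fmu 𝕜 d m u).support.card ≤ d + 1 :=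
  card_support_Fmu_general 𝕜 m u hm hu hu2

end Resolution
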